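/- Given non-empty disjoint sets X_s and X_ns', the set X_s is strongly opaque with respect to X_ns' (every element of X_s is opaque with respect to X_ns') if and only if X_s is a strict subset of X_ns' ⊕ V(Γ), the Minkowski sum of X_ns' with the weakly unobservable subspace. -/
import Mathlib


open Matrix

/-- State trajectory of the LTI system x(k+1) = A x(k) + B u(k). -/
noncomputable def traj {n p : ℕ} (A : Matrix (Fin n) (Fin n) ℝ) (B : Matrix (Fin n) (Fin p) ℝ)
    (u : ℕ → Fin p → ℝ) (x0 : Fin n → ℝ) : ℕ → Fin n → ℝ
  | 0 => x0
  | k + 1 => A.mulVec (traj A B u x0 k) + B.mulVec (u k)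

/-- Output y(k) = C x(k) + D u(k). -/
noncomputable def outSeq {n p m : ℕ} (A : Matrix (Fin n) (Fin n) ℝ) (B : Matrix (Fin n) (Fin p) ℝ)
    (C : Matrix (Fin m) (Fin n) ℝ) (D : Matrix (Fin m) (Fin p) ℝ)
    (u : ℕ → Fin p → ℝ) (x0 : Fin n → ℝ) (k : ℕ) : Fin m → ℝ :=
  C.mulVec (traj A B u x0 k) + D.mulVec (u k)

/-- Weakly unobservable subspace: states from which some input sequence keeps the output
identically zero. -/
noncomputable def wus {n p m : ℕ} (A : Matrix (Fin n) (Fin n) ℝ) (B : Matrix (Fin n) (Fin p) ℝ)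
    (C : Matrix (Fin m) (Fin n) ℝ) (D : Matrix (Fin m) (Fin p) ℝ) : Set (Fin n → ℝ) :=
  {x | ∃ u : ℕ → Fin p → ℝ, ∀ k : ℕ, outSeq A B C D u x k = 0}

/-- Opacity of the secret initial state `xs` with respect to the non-secret initial state `xns`:
for every input sequence applied from `xs` there is an input sequence from `xns` producing the
same output sequence. -/
noncomputable def isOpaque {n p m : ℕ} (A : Matrix (Fin n) (Fin n) ℝ) (B : Matrix (Fin n) (Fin p) ℝ)
    (C : Matrix (Fin m) (Fin n) ℝ) (D : Matrix (Fin m) (Fin p) ℝ)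
    (xs xns : Fin n → ℝ) : Prop :=
  ∀ us : ℕ → Fin p → ℝ, ∃ uns : ℕ → Fin p → ℝ,
    ∀ k : ℕ, outSeq A B C D us xs k = outSeq A B C D uns xns k


lemma traj_sub {n p : ℕ} (A : Matrix (Fin n) (Fin n) ℝ) (B : Matrix (Fin n) (Fin p) ℝ)
    (u1 u2 : ℕ → Fin p → ℝ) (x1 x2 : Fin n → ℝ) (k : ℕ) :
    traj A B (fun k => u1 k - u2 k) (x1 - x2) k = traj A B u1 x1 k - traj A B u2 x2 k := by
  induction k with
  | zero => rfl
  | succ k ih =>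
    simp only [traj, ih, Matrix.mulVec_sub]
    abel

lemma outSeq_sub {n p m : ℕ} (A : Matrix (Fin n) (Fin n) ℝ) (B : Matrix (Fin n) (Fin p) ℝ)
    (C : Matrix (Fin m) (Fin n) ℝ) (D : Matrix (Fin m) (Fin p) ℝ)
    (u1 u2 : ℕ → Fin p → ℝ) (x1 x2 : Fin n → ℝ) (k : ℕ) :
    outSeq A B C D (fun k => u1 k - u2 k) (x1 - x2) k
      = outSeq A B C D u1 x1 k - outSeq A B C D u2 x2 k := by
  simp only [outSeq, traj_sub, Matrix.mulVec_sub]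
  abel

lemma isOpaque_iff_sub_mem {n p m : ℕ} (A : Matrix (Fin n) (Fin n) ℝ)
    (B : Matrix (Fin n) (Fin p) ℝ) (C : Matrix (Fin m) (Fin n) ℝ) (D : Matrix (Fin m) (Fin p) ℝ)
    (xs xns : Fin n → ℝ) :
    isOpaque A B C D xs xns ↔ xs - xns ∈ wus A B C D := by
  constructor
  · intro h
    obtain ⟨uns, huns⟩ := h 0
    exact ⟨fun k => (0 : ℕ → Fin p → ℝ) k - uns k, fun k => by
      rw [outSeq_sub, huns k, sub_self]⟩
  · rintro ⟨u0, h0⟩ us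
    refine ⟨fun k => us k - u0 k, fun k => ?_⟩
    have := outSeq_sub A B C D us (fun k => us k - u0 k) xs xns k
    have hx : xs - xns = xs - xns := rfl
    have h1 : outSeq A B C D (fun k => us k - (us k - u0 k)) (xs - xns) k
        = outSeq A B C D us xs k - outSeq A B C D (fun k => us k - u0 k) xns k :=
      outSeq_sub A B C D us (fun k => us k - u0 k) xs xns k
    have h2 : (fun k => us k - (us k - u0 k)) = u0 := by funext k; abel
    rw [h2] at h1
    rw [h0 k] at h1
    exact (sub_eq_zero.mp h1.symm)

/-- Strong opacity of Xs w.r.t. Xns' iff Xs ⊂ Xns' ⊕ V(Γ) (strict inclusion). -/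
theorem strongly_opaque_iff {n p m : ℕ}
    (A : Matrix (Fin n) (Fin n) ℝ) (B : Matrix (Fin n) (Fin p) ℝ)
    (C : Matrix (Fin m) (Fin n) ℝ) (D : Matrix (Fin m) (Fin p) ℝ)
    (Xs Xns : Set (Fin n → ℝ)) (hXs : Xs.Nonempty) (hXns : Xns.Nonempty)
    (hdisj : Disjoint Xs Xns) :
    (∀ xs ∈ Xs, ∃ xns ∈ Xns, isOpaque A B C D xs xns) ↔
      Xs ⊂ {z | ∃ xns ∈ Xns, ∃ v ∈ wus A B C D, z = xns + v} := by
  have hzero : (0 : Fin n → ℝ) ∈ wus A B C D := by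
    refine ⟨0, fun k => ?_⟩
    have ht : ∀ j, traj A B (0 : ℕ → Fin p → ℝ) (0 : Fin n → ℝ) j = 0 := by
      intro j
      induction j with
      | zero => rfl
      | succ j ih => simp [traj, ih, Matrix.mulVec_zero]
    simp [outSeq, ht, Matrix.mulVec_zero]
  constructor
  · intro h
    constructor
    · intro xs hxs
      obtain ⟨xns, hxns, hop⟩ := h xs hxs
      exact ⟨xns, hxns, xs - xns, (isOpaque_iff_sub_mem A B C D xs xns).mp hop, by abel⟩
    · intro hsub
      obtain ⟨x0, hx0⟩ := hXns
      have hmem : x0 ∈ {z | ∃ xns ∈ Xns, ∃ v ∈ wus A B C D, z = xns + v} :=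
        ⟨x0, hx0, 0, hzero, by simp⟩
      have : x0 ∈ Xs := hsub hmem
      exact hdisj.ne_of_mem this hx0 rfl
  · rintro ⟨hsub, -⟩ xs hxs
    obtain ⟨xns, hxns, v, hv, hveq⟩ := hsub hxs
    refine ⟨xns, hxns, (isOpaque_iff_sub_mem A B C D xs xns).mpr ?_⟩
    have : xs - xns = v := by rw [hveq]; abel
    rw [this]; exact hv
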